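/- For any integers s and i with i odd, the conjugacy class of a^s u^i in G is {a^s u^i, a^(s+2^(l-1)) u^i, a^(-s) u^(-i), a^(-s+2^(l-1)) u^(-i)}, and in particular has exactly 4 elements. -/

import Mathlib

namespace ZkDl

def n₁ (l : ℕ) : ℕ := 2 ^ (l - 1) + 1
def n₂ (l : ℕ) : ℕ := 2 ^ (l - 1) - 1

/-- The relations of the presentation
`⟨a, u, v | a^(2^l) = u^k = v^2 = 1, u a u⁻¹ = a^(n₁), v a v = a^(n₂), v u v = u⁻¹⟩`,
with generators `a = 0`, `u = 1`, `v = 2` in `Fin 3`. -/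
def rels (l k : ℕ) : Set (FreeGroup (Fin 3)) :=
  { FreeGroup.of 0 ^ 2 ^ l,
    FreeGroup.of 1 ^ k,
    FreeGroup.of 2 ^ 2,
    FreeGroup.of 1 * FreeGroup.of 0 * (FreeGroup.of 1)⁻¹ * (FreeGroup.of 0 ^ n₁ l)⁻¹,
    FreeGroup.of 2 * FreeGroup.of 0 * FreeGroup.of 2 * (FreeGroup.of 0 ^ n₂ l)⁻¹,
    FreeGroup.of 2 * FreeGroup.of 1 * FreeGroup.of 2 * FreeGroup.of 1 }

/-- The group `Z_{2^l} ⋊ D_k` given by the presentation above. -/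
abbrev G (l k : ℕ) : Type := PresentedGroup (rels l k)

def a (l k : ℕ) : G l k := PresentedGroup.of 0
def u (l k : ℕ) : G l k := PresentedGroup.of 1
def v (l k : ℕ) : G l k := PresentedGroup.of 2

end ZkDl
open ZkDl

/-!
For odd `j`, conjugation by `a^e`, by `u^(±1)` and by `v` sends `a^m u^j` to
`a^(m - e·2^(l-1)) u^j`, to `a^((2^(l-1)+1) m) u^j` and to `a^((2^(l-1)-1) m) u^(-j)`; the middle
formula holds for every odd power of `u` because `u²` commutes with `a`. Since
`(2^(l-1) ± 1) m = ±m + m·2^(l-1)`, these are exact integer identities preserving the family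
`a^(εs + t·2^(l-1)) u^(εi)` (`ε = ±1`, `t ∈ ℤ`), and the generators reach every member of it from
`a^s u^i`. So this family is the conjugacy class, and since `a^(2^l) = 1` it is the four listed
elements. They are distinct because two homomorphisms read off the exponents: to `D_k`
(`a ↦ 1`, `u ↦ r 1`, `v ↦ sr 0`), giving `j mod k`, where `i ≢ -i` because `4 ∣ k`; and to the
affine permutations of `ℤ/2^l` (`a` translates by `1`, `u` and `v` multiply by the involutions
`n₁`, `n₂`), giving `m mod 2^l`.
-/

theorem mem_of_isConj_of_closure_eq_top {H : Type*} [Group H] {S T : Set H}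
    (hS : Subgroup.closure S = ⊤) (hT : ∀ g ∈ S, ∀ y ∈ T, g * y * g⁻¹ ∈ T)
    (hT' : ∀ g ∈ S, ∀ y ∈ T, g⁻¹ * y * g ∈ T) {x y : H} (hx : x ∈ T) (hxy : IsConj x y) :
    y ∈ T := by
  obtain ⟨g, rfl⟩ := isConj_iff.mp hxy
  clear hxy
  have hg : g ∈ Subgroup.closure S := hS ▸ Subgroup.mem_top g
  induction hg using Subgroup.closure_induction'' generalizing x with
  | mem g hg => exact hT g hg x hx
  | inv_mem g hg => simpa using hT' g hg x hx
  | one => simpa using hx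
  | mul g h _ _ ihg ihh => simpa [mul_assoc] using ihg (ihh hx)

theorem Odd.units_mul {i : ℤ} (hi : Odd i) (ε : ℤˣ) : Odd (ε * i) := by
  rcases Int.units_eq_one_or ε with rfl | rfl <;> simpa

theorem involutive_mul_left_of_mul_self_eq_one {R : Type*} [Monoid R] {c : R} (hc : c * c = 1) :
    Function.Involutive (c * ·) :=
  fun x => show c * (c * x) = x by rw [← mul_assoc, hc, one_mul]

theorem ZMod.two_pow_self_eq_zero (l : ℕ) : (2 : ZMod (2 ^ l)) ^ l = 0 := by
  exact_mod_cast ZMod.natCast_self (2 ^ l)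

theorem ZMod.two_pow_pred_ne_zero {l : ℕ} (hl : 1 ≤ l) : (2 : ZMod (2 ^ l)) ^ (l - 1) ≠ 0 := by
  intro h
  have h' : 2 ^ l ∣ 2 ^ (l - 1) := (ZMod.natCast_eq_zero_iff _ _).mp (by exact_mod_cast h)
  rw [Nat.pow_dvd_pow_iff_le_right (by norm_num)] at h'
  omega

theorem ZMod.intCast_ne_neg_of_odd {k : ℕ} (hk : 4 ∣ k) {i : ℤ} (hi : Odd i) :
    (i : ZMod k) ≠ -i := by
  intro h
  have h2i : (k : ℤ) ∣ 2 * i :=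
    (ZMod.intCast_zmod_eq_zero_iff_dvd _ _).mp (by push_cast; linear_combination h)
  have h4 : (4 : ℤ) ∣ 2 * i := (Int.natCast_dvd_natCast.mpr hk).trans h2i
  obtain ⟨e, rfl⟩ := hi
  omega

namespace ZkDl

variable {l k : ℕ}

lemma a_pow_two_pow : a l k ^ 2 ^ l = 1 :=
  (map_pow _ _ _).symm.trans (PresentedGroup.one_of_mem (by simp [rels]))

lemma v_sq : v l k ^ 2 = 1 :=
  (map_pow _ _ _).symm.trans (PresentedGroup.one_of_mem (by simp [rels]))

lemma u_mul_a_mul_u_inv : u l k * a l k * (u l k)⁻¹ = a l k ^ n₁ l := by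
  have h := PresentedGroup.one_of_mem (rels := rels l k)
    (x := .of 1 * .of 0 * (.of 1)⁻¹ * (.of 0 ^ n₁ l)⁻¹) (by simp [rels])
  simp only [map_mul, map_inv, map_pow] at h
  exact mul_inv_eq_one.mp h

lemma v_mul_a_mul_v : v l k * a l k * v l k = a l k ^ n₂ l := by
  have h := PresentedGroup.one_of_mem (rels := rels l k)
    (x := .of 2 * .of 0 * .of 2 * (.of 0 ^ n₂ l)⁻¹) (by simp [rels])
  simp only [map_mul, map_inv, map_pow] at h
  exact mul_inv_eq_one.mp h

lemma v_mul_u_mul_v : v l k * u l k * v l k = (u l k)⁻¹ := by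
  have h := PresentedGroup.one_of_mem (rels := rels l k)
    (x := .of 2 * .of 1 * .of 2 * .of 1) (by simp [rels])
  simp only [map_mul] at h
  exact eq_inv_of_mul_eq_one_left h

lemma v_inv : (v l k)⁻¹ = v l k :=
  inv_eq_of_mul_eq_one_right ((sq _).symm.trans v_sq)

lemma closure_a_u_v : Subgroup.closure {a l k, u l k, v l k} = ⊤ := by
  rw [← PresentedGroup.closure_range_of]
  congr 1
  ext g
  simp [Fin.exists_fin_succ, a, u, v, eq_comm]

lemma a_zpow_add_mul_two_pow (m c : ℤ) : a l k ^ (m + c * 2 ^ l) = a l k ^ m := by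
  rw [zpow_add, mul_comm, zpow_mul, show ((2 : ℤ) ^ l) = ((2 ^ l : ℕ) : ℤ) by simp,
    zpow_natCast, a_pow_two_pow, one_zpow, mul_one]

lemma a_zpow_add_mul_two_pow_pred_eq_or (hl : 1 ≤ l) (m t : ℤ) :
    a l k ^ (m + t * 2 ^ (l - 1)) = a l k ^ m ∨
      a l k ^ (m + t * 2 ^ (l - 1)) = a l k ^ (m + 2 ^ (l - 1)) := by
  obtain ⟨l, rfl⟩ : ∃ l', l = l' + 1 := ⟨l - 1, by omega⟩
  rw [Nat.add_sub_cancel]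
  obtain ⟨c, rfl | rfl⟩ := Int.even_or_odd' t
  · left
    rw [← a_zpow_add_mul_two_pow m c]
    ring_nf
  · right
    rw [← a_zpow_add_mul_two_pow (m + 2 ^ l) c]
    ring_nf

lemma u_mul_a_zpow_mul_u_inv (m : ℤ) :
    u l k * a l k ^ m * (u l k)⁻¹ = a l k ^ ((2 ^ (l - 1) + 1) * m) := by
  rw [← conj_zpow, u_mul_a_mul_u_inv, ← zpow_natCast, ← zpow_mul, n₁, Nat.cast_add]
  norm_num

lemma v_mul_a_zpow_mul_v (m : ℤ) :
    v l k * a l k ^ m * v l k = a l k ^ ((2 ^ (l - 1) - 1) * m) := by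
  nth_rw 2 [← v_inv]
  rw [← conj_zpow, v_inv, v_mul_a_mul_v, ← zpow_natCast, ← zpow_mul, n₂,
    Nat.cast_sub Nat.one_le_two_pow]
  norm_num

lemma v_mul_u_zpow_mul_v (j : ℤ) : v l k * u l k ^ j * v l k = u l k ^ (-j) := by
  nth_rw 2 [← v_inv]
  rw [← conj_zpow, v_inv, v_mul_u_mul_v, zpow_neg, inv_zpow]

lemma commute_u_sq_a (hl : 2 ≤ l) : Commute (u l k ^ 2) (a l k) := by
  have hexp :
      ((2 : ℤ) ^ (l - 1) + 1) * ((2 ^ (l - 1) + 1) * 1) = 1 + (2 ^ (l - 2) + 1) * 2 ^ l := by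
    obtain ⟨l, rfl⟩ : ∃ l', l = l' + 2 := ⟨l - 2, by omega⟩
    rw [show l + 2 - 1 = l + 1 from rfl, Nat.add_sub_cancel]
    ring
  refine mul_inv_eq_iff_eq_mul.mp ?_
  calc u l k ^ 2 * a l k * (u l k ^ 2)⁻¹
      = u l k * (u l k * a l k ^ (1 : ℤ) * (u l k)⁻¹) * (u l k)⁻¹ := by rw [zpow_one, sq]; group
    _ = a l k ^ ((1 : ℤ) + (2 ^ (l - 2) + 1) * 2 ^ l) := by
        rw [u_mul_a_zpow_mul_u_inv, u_mul_a_zpow_mul_u_inv, hexp]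
    _ = a l k := by rw [a_zpow_add_mul_two_pow, zpow_one]

lemma u_zpow_mul_a_zpow_mul_u_zpow_inv (hl : 2 ≤ l) {j : ℤ} (hj : Odd j) (m : ℤ) :
    u l k ^ j * a l k ^ m * (u l k ^ j)⁻¹ = a l k ^ ((2 ^ (l - 1) + 1) * m) := by
  obtain ⟨t, rfl⟩ := hj
  have hcomm : Commute ((u l k ^ 2) ^ t) (a l k ^ ((2 ^ (l - 1) + 1) * m)) :=
    (commute_u_sq_a hl).zpow_zpow _ _
  calc u l k ^ (2 * t + 1) * a l k ^ m * (u l k ^ (2 * t + 1))⁻¹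
      = (u l k ^ 2) ^ t * (u l k * a l k ^ m * (u l k)⁻¹) * ((u l k ^ 2) ^ t)⁻¹ := by
        rw [zpow_add_one, zpow_mul]; norm_cast; group
    _ = a l k ^ ((2 ^ (l - 1) + 1) * m) := by
        rw [u_mul_a_zpow_mul_u_inv, hcomm.mul_inv_cancel]

lemma a_zpow_conj (hl : 2 ≤ l) {j : ℤ} (hj : Odd j) (e m : ℤ) :
    a l k ^ e * (a l k ^ m * u l k ^ j) * (a l k ^ e)⁻¹ =
      a l k ^ (m - e * 2 ^ (l - 1)) * u l k ^ j :=
  calc a l k ^ e * (a l k ^ m * u l k ^ j) * (a l k ^ e)⁻¹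
      = a l k ^ (e + m) * (u l k ^ j * a l k ^ (-e) * (u l k ^ j)⁻¹) * u l k ^ j := by group
    _ = a l k ^ (m - e * 2 ^ (l - 1)) * u l k ^ j := by
        rw [u_zpow_mul_a_zpow_mul_u_zpow_inv hl hj, ← zpow_add]; ring_nf

lemma u_zpow_conj (hl : 2 ≤ l) {f : ℤ} (hf : Odd f) (m j : ℤ) :
    u l k ^ f * (a l k ^ m * u l k ^ j) * (u l k ^ f)⁻¹ =
      a l k ^ ((2 ^ (l - 1) + 1) * m) * u l k ^ j := by
  rw [← u_zpow_mul_a_zpow_mul_u_zpow_inv hl hf]; group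

lemma v_conj (m j : ℤ) :
    v l k * (a l k ^ m * u l k ^ j) * v l k = a l k ^ ((2 ^ (l - 1) - 1) * m) * u l k ^ (-j) := by
  have hvv (x : G l k) : v l k * (v l k * x) = x := by rw [← mul_assoc, ← sq, v_sq, one_mul]
  rw [← v_mul_a_zpow_mul_v, ← v_mul_u_zpow_mul_v]
  simp only [mul_assoc, hvv]

def signShiftSet (l k : ℕ) (s i : ℤ) : Set (G l k) :=
  {y | ∃ ε : ℤˣ, ∃ t : ℤ, y = a l k ^ (ε * s + t * 2 ^ (l - 1)) * u l k ^ (ε * i)}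

section
variable {s i : ℤ} {y : G l k}

lemma a_zpow_conj_mem_signShiftSet (hl : 2 ≤ l) (hi : Odd i) (e : ℤ)
    (hy : y ∈ signShiftSet l k s i) : a l k ^ e * y * (a l k ^ e)⁻¹ ∈ signShiftSet l k s i := by
  obtain ⟨ε, t, rfl⟩ := hy
  rw [a_zpow_conj hl (hi.units_mul ε)]
  exact ⟨ε, t - e, by ring_nf⟩

lemma u_zpow_conj_mem_signShiftSet (hl : 2 ≤ l) {f : ℤ} (hf : Odd f)
    (hy : y ∈ signShiftSet l k s i) : u l k ^ f * y * (u l k ^ f)⁻¹ ∈ signShiftSet l k s i := by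
  obtain ⟨ε, t, rfl⟩ := hy
  rw [u_zpow_conj hl hf]
  exact ⟨ε, t + (ε * s + t * 2 ^ (l - 1)), by ring_nf⟩

lemma v_conj_mem_signShiftSet (hy : y ∈ signShiftSet l k s i) :
    v l k * y * v l k ∈ signShiftSet l k s i := by
  obtain ⟨ε, t, rfl⟩ := hy
  rw [v_conj]
  exact ⟨-ε, -t + (ε * s + t * 2 ^ (l - 1)), by push_cast; ring_nf⟩

theorem isConj_iff_mem_signShiftSet (hl : 2 ≤ l) (hi : Odd i) :
    IsConj (a l k ^ s * u l k ^ i) y ↔ y ∈ signShiftSet l k s i := by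
  constructor
  · refine mem_of_isConj_of_closure_eq_top closure_a_u_v ?_ ?_ ⟨1, 0, by simp⟩
    · rintro _ (rfl | rfl | rfl) y hy
      · simpa using a_zpow_conj_mem_signShiftSet hl hi 1 hy
      · simpa using u_zpow_conj_mem_signShiftSet hl odd_one hy
      · simpa [v_inv] using v_conj_mem_signShiftSet hy
    · rintro _ (rfl | rfl | rfl) y hy
      · simpa using a_zpow_conj_mem_signShiftSet hl hi (-1) hy
      · simpa using u_zpow_conj_mem_signShiftSet hl (by decide : Odd (-1 : ℤ)) hy
      · simpa [v_inv] using v_conj_mem_signShiftSet hy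
  · rintro ⟨ε, t, rfl⟩
    rcases Int.units_eq_one_or ε with rfl | rfl
    · exact isConj_iff.mpr ⟨a l k ^ (-t), by rw [a_zpow_conj hl hi]; push_cast; ring_nf⟩
    · have hv : IsConj (a l k ^ s * u l k ^ i) (a l k ^ ((2 ^ (l - 1) - 1) * s) * u l k ^ (-i)) :=
        isConj_iff.mpr ⟨v l k, by rw [v_inv, v_conj]⟩
      refine hv.trans (isConj_iff.mpr ⟨a l k ^ (s - t), ?_⟩)
      rw [a_zpow_conj hl hi.neg]
      push_cast
      ring_nf

end

lemma signShiftSet_eq (hl : 1 ≤ l) (s i : ℤ) :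
    signShiftSet l k s i =
      {a l k ^ s * u l k ^ i, a l k ^ (s + 2 ^ (l - 1)) * u l k ^ i,
       a l k ^ (-s) * u l k ^ (-i), a l k ^ (-s + 2 ^ (l - 1)) * u l k ^ (-i)} := by
  ext y
  constructor
  · rintro ⟨ε, t, rfl⟩
    rcases Int.units_eq_one_or ε with rfl | rfl <;>
      simp only [Units.val_one, one_mul, Units.val_neg, neg_mul]
    · rcases a_zpow_add_mul_two_pow_pred_eq_or (k := k) hl s t with h | h <;> simp [h]
    · rcases a_zpow_add_mul_two_pow_pred_eq_or (k := k) hl (-s) t with h | h <;> simp [h]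
  · rintro (rfl | rfl | rfl | rfl)
    exacts [⟨1, 0, by simp⟩, ⟨1, 1, by simp⟩, ⟨-1, 0, by simp⟩, ⟨-1, 1, by simp⟩]

def toDihedral (l k : ℕ) : G l k →* DihedralGroup k :=
  PresentedGroup.toGroup (f := ![1, .r 1, .sr 0]) <| by
    simp only [rels, Set.mem_insert_iff, Set.mem_singleton_iff]
    rintro r (rfl | rfl | rfl | rfl | rfl | rfl) <;> simp [sq]

lemma toDihedral_a_zpow_mul_u_zpow (m j : ℤ) :
    toDihedral l k (a l k ^ m * u l k ^ j) = .r j := by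
  simp [toDihedral, a, u, PresentedGroup.toGroup.of]

lemma n₁_mul_n₁ (hl : 2 ≤ l) : (n₁ l : ZMod (2 ^ l)) * n₁ l = 1 := by
  obtain ⟨l, rfl⟩ : ∃ l', l = l' + 2 := ⟨l - 2, by omega⟩
  simp only [n₁, show l + 2 - 1 = l + 1 from rfl]
  push_cast
  linear_combination (2 ^ l + 1 : ZMod (2 ^ (l + 2))) * ZMod.two_pow_self_eq_zero (l + 2)

lemma n₂_mul_n₂ (hl : 2 ≤ l) : (n₂ l : ZMod (2 ^ l)) * n₂ l = 1 := by
  obtain ⟨l, rfl⟩ : ∃ l', l = l' + 2 := ⟨l - 2, by omega⟩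
  simp only [n₂, show l + 2 - 1 = l + 1 from rfl, Nat.cast_sub Nat.one_le_two_pow]
  push_cast
  linear_combination (2 ^ l - 1 : ZMod (2 ^ (l + 2))) * ZMod.two_pow_self_eq_zero (l + 2)

def toAffine (hl : 2 ≤ l) (hk : 2 ∣ k) : G l k →* Equiv.Perm (ZMod (2 ^ l)) :=
  PresentedGroup.toGroup (f := ![Equiv.addRight 1,
    (involutive_mul_left_of_mul_self_eq_one (n₁_mul_n₁ hl)).toPerm,
    (involutive_mul_left_of_mul_self_eq_one (n₂_mul_n₂ hl)).toPerm]) <| by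
    have hsq {f : ZMod (2 ^ l) → ZMod (2 ^ l)} (h : Function.Involutive f) : h.toPerm f ^ 2 = 1 :=
      Equiv.ext fun x => by simp [sq, h x]
    simp only [rels, Set.mem_insert_iff, Set.mem_singleton_iff]
    rintro r (rfl | rfl | rfl | rfl | rfl | rfl)
    · ext x; simp
    · obtain ⟨c, rfl⟩ := hk
      simp [pow_mul, hsq]
    · simp [hsq]
    · ext x
      have hx : (n₁ l : ZMod (2 ^ l)) * (n₁ l * (x + -n₁ l) + 1) = x := by
        linear_combination (x - n₁ l) * n₁_mul_n₁ hl
      simpa [Equiv.Perm.inv_def] using hx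
    · ext x
      have hx : (n₂ l : ZMod (2 ^ l)) * (n₂ l * (x + -n₂ l) + 1) = x := by
        linear_combination (x - n₂ l) * n₂_mul_n₂ hl
      simpa [Equiv.Perm.inv_def] using hx
    · ext x
      have hx : (n₂ l : ZMod (2 ^ l)) * n₁ l * n₂ l * (n₁ l * x) = x := by
        linear_combination (n₂ l * n₂ l * x : ZMod (2 ^ l)) * n₁_mul_n₁ hl + x * n₂_mul_n₂ hl
      simpa using hx

lemma toAffine_a_zpow_mul_u_zpow_zero (hl : 2 ≤ l) (hk : 2 ∣ k) (m j : ℤ) :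
    toAffine hl hk (a l k ^ m * u l k ^ j) 0 = m := by
  have hu : toAffine hl hk (u l k) 0 = 0 := by simp [toAffine, u, PresentedGroup.toGroup.of]
  have ha : toAffine hl hk (a l k) = Equiv.addRight 1 := PresentedGroup.toGroup.of _
  simp [ha, Equiv.Perm.zpow_apply_eq_self_of_apply_eq_self hu, Equiv.zsmul_addRight]

lemma eq_of_a_zpow_mul_u_zpow_eq (hl : 2 ≤ l) (hk : 2 ∣ k) {m m' j j' : ℤ}
    (h : a l k ^ m * u l k ^ j = a l k ^ m' * u l k ^ j') :
    (m : ZMod (2 ^ l)) = m' ∧ (j : ZMod k) = j' := by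
  constructor
  · simpa only [toAffine_a_zpow_mul_u_zpow_zero] using congrArg (fun g => toAffine hl hk g 0) h
  · simpa [toDihedral_a_zpow_mul_u_zpow] using congrArg (toDihedral l k) h

lemma a_zpow_mul_u_zpow_ne_add (hl : 2 ≤ l) (hk : 2 ∣ k) (m j : ℤ) :
    a l k ^ m * u l k ^ j ≠ a l k ^ (m + 2 ^ (l - 1)) * u l k ^ j := fun h => by
  have hm := (eq_of_a_zpow_mul_u_zpow_eq hl hk h).1
  push_cast at hm
  exact ZMod.two_pow_pred_ne_zero (by omega) (left_eq_add.mp hm)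

lemma a_zpow_mul_u_zpow_ne_neg (hl : 2 ≤ l) (hk : 4 ∣ k) {j : ℤ} (hj : Odd j) (m m' : ℤ) :
    a l k ^ m * u l k ^ j ≠ a l k ^ m' * u l k ^ (-j) := fun h => by
  have hj' := (eq_of_a_zpow_mul_u_zpow_eq hl ((dvd_mul_left 2 2).trans hk) h).2
  push_cast at hj'
  exact ZMod.intCast_ne_neg_of_odd hk hj hj'

end ZkDl

theorem conj_class_odd (l k : ℕ) (hl : 3 ≤ l) (hk : 4 ∣ k) (s i : ℤ) (hi : Odd i) :
    {y : G l k | IsConj (a l k ^ s * u l k ^ i) y} =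
      {a l k ^ s * u l k ^ i,
       a l k ^ (s + 2 ^ (l - 1)) * u l k ^ i,
       a l k ^ (-s) * u l k ^ (-i),
       a l k ^ (-s + 2 ^ (l - 1)) * u l k ^ (-i)} ∧
    {y : G l k | IsConj (a l k ^ s * u l k ^ i) y}.ncard = 4 := by
  have hl2 : 2 ≤ l := by omega
  have hk2 : 2 ∣ k := (dvd_mul_left 2 2).trans hk
  have hclass : {y : G l k | IsConj (a l k ^ s * u l k ^ i) y} = signShiftSet l k s i :=
    Set.ext fun _ => isConj_iff_mem_signShiftSet hl2 hi
  rw [hclass, signShiftSet_eq (by omega)]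
  exact ⟨rfl, Set.ncard_eq_four.mpr ⟨_, _, _, _,
    a_zpow_mul_u_zpow_ne_add hl2 hk2 s i, a_zpow_mul_u_zpow_ne_neg hl2 hk hi _ _,
    a_zpow_mul_u_zpow_ne_neg hl2 hk hi _ _, a_zpow_mul_u_zpow_ne_neg hl2 hk hi _ _,
    a_zpow_mul_u_zpow_ne_neg hl2 hk hi _ _, a_zpow_mul_u_zpow_ne_add hl2 hk2 (-s) (-i), rfl⟩⟩
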